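/- Monotonicity of the Hellinger-type quantity h under appending a coordinate: if μ_o' = (μ_o, t_o), μ_g' = (μ_g, t_g), Σ_o' = diag(Σ_o, s_o^2) and Σ_g' = diag(Σ_g, s_g^2) with s_o, s_g > 0, then h(μ_o', Σ_o', μ_g', Σ_g') ≥ h(μ_o, Σ_o, μ_g, Σ_g). Consequently h is nondecreasing in the number of coordinates on which the two Gaussians differ. -/

import Mathlib

open MeasureTheory

/-- The Hellinger-type quantity
`h(μ_1, Σ_1, μ_2, Σ_2) = (1 − (det Σ_1)^{1/4}·(det Σ_2)^{1/4} / det((Σ_1+Σ_2)/2)^{1/2}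
  · exp(−(1/8)·(μ_1−μ_2)ᵀ·((Σ_1+Σ_2)/2)⁻¹·(μ_1−μ_2)))^{1/2}`. -/
noncomputable def hGauss {ι : Type*} [Fintype ι] [DecidableEq ι]
    (μ1 : ι → ℝ) (S1 : Matrix ι ι ℝ) (μ2 : ι → ℝ) (S2 : Matrix ι ι ℝ) : ℝ :=
  Real.sqrt (1 -
    S1.det ^ ((1 : ℝ) / 4) * S2.det ^ ((1 : ℝ) / 4)
        / (((2 : ℝ)⁻¹ • (S1 + S2)).det) ^ ((1 : ℝ) / 2)
      * Real.exp (-(1 / 8) *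
          dotProduct (μ1 - μ2) (((2 : ℝ)⁻¹ • (S1 + S2))⁻¹.mulVec (μ1 - μ2))))

/-! For diagonal covariances the Bhattacharyya coefficient
`(det Σ₁)^{1/4} (det Σ₂)^{1/4} / det((Σ₁+Σ₂)/2)^{1/2} · exp(…)` inside `hGauss` factors into
one-dimensional coefficients, one per coordinate. Each factor lies in `[0, 1]`: the
determinant part by AM–GM, the exponential because its exponent is `≤ 0`. Appending a
coordinate therefore multiplies the coefficient by a number in `[0, 1]`, which can only
increase `h = √(1 - coefficient)`. -/

open Real

noncomputable def bhattacharyyaCoeff1 (a1 w1 a2 w2 : ℝ) : ℝ :=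
  w1 ^ ((1 : ℝ) / 4) * w2 ^ ((1 : ℝ) / 4) / ((2 : ℝ)⁻¹ * (w1 + w2)) ^ ((1 : ℝ) / 2)
    * exp (-(1 / 8) * ((a1 - a2) * (((2 : ℝ)⁻¹ * (w1 + w2))⁻¹ * (a1 - a2))))

section BhattacharyyaCoeff1

variable {a1 a2 w1 w2 : ℝ}

lemma bhattacharyyaCoeff1_nonneg (h1 : 0 ≤ w1) (h2 : 0 ≤ w2) :
    0 ≤ bhattacharyyaCoeff1 a1 w1 a2 w2 := by
  unfold bhattacharyyaCoeff1
  positivity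

lemma rpow_quarter_mul_rpow_quarter_le (h1 : 0 ≤ w1) (h2 : 0 ≤ w2) :
    w1 ^ ((1 : ℝ) / 4) * w2 ^ ((1 : ℝ) / 4) ≤ ((2 : ℝ)⁻¹ * (w1 + w2)) ^ ((1 : ℝ) / 2) :=
  calc w1 ^ ((1 : ℝ) / 4) * w2 ^ ((1 : ℝ) / 4) = (w1 * w2) ^ ((1 : ℝ) / 4) :=
        (mul_rpow h1 h2).symm
    _ ≤ (((2 : ℝ)⁻¹ * (w1 + w2)) ^ 2) ^ ((1 : ℝ) / 4) :=
        rpow_le_rpow (by positivity) (by nlinarith [sq_nonneg (w1 - w2)]) (by norm_num)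
    _ = ((2 : ℝ)⁻¹ * (w1 + w2)) ^ ((1 : ℝ) / 2) := by
        rw [← rpow_natCast, ← rpow_mul (by positivity)]
        norm_num

lemma bhattacharyyaCoeff1_le_one (h1 : 0 ≤ w1) (h2 : 0 ≤ w2) :
    bhattacharyyaCoeff1 a1 w1 a2 w2 ≤ 1 := by
  have hdet := div_le_one_of_le₀ (rpow_quarter_mul_rpow_quarter_le h1 h2) (by positivity)
  have hquad : 0 ≤ (a1 - a2) * (((2 : ℝ)⁻¹ * (w1 + w2))⁻¹ * (a1 - a2)) := by
    rw [mul_left_comm]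
    exact mul_nonneg (by positivity) (mul_self_nonneg _)
  have hexp : exp (-(1 / 8) * ((a1 - a2) * (((2 : ℝ)⁻¹ * (w1 + w2))⁻¹ * (a1 - a2)))) ≤ 1 :=
    exp_le_one_iff.mpr (by linarith)
  exact mul_le_one₀ hdet (exp_pos _).le hexp

end BhattacharyyaCoeff1

lemma Matrix.inv_diagonal_of_ne_zero {ι K : Type*} [Fintype ι] [DecidableEq ι] [Field K]
    {v : ι → K} (hv : ∀ i, v i ≠ 0) : (Matrix.diagonal v)⁻¹ = Matrix.diagonal v⁻¹ :=
  Matrix.inv_eq_right_inv <| by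
    rw [Matrix.diagonal_mul_diagonal, ← Matrix.diagonal_one]
    exact congrArg Matrix.diagonal (funext fun i => mul_inv_cancel₀ (hv i))

lemma hGauss_diagonal {ι : Type*} [Fintype ι] [DecidableEq ι] (μ1 μ2 v1 v2 : ι → ℝ)
    (h1 : ∀ i, 0 < v1 i) (h2 : ∀ i, 0 < v2 i) :
    hGauss μ1 (Matrix.diagonal v1) μ2 (Matrix.diagonal v2)
      = √(1 - ∏ i, bhattacharyyaCoeff1 (μ1 i) (v1 i) (μ2 i) (v2 i)) := by
  have hmid : ∀ i, 0 < (2 : ℝ)⁻¹ * (v1 i + v2 i) := fun i => by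
    have := h1 i; have := h2 i; positivity
  have hquad : dotProduct (μ1 - μ2)
      ((Matrix.diagonal fun i => (2 : ℝ)⁻¹ * (v1 i + v2 i))⁻¹.mulVec (μ1 - μ2))
      = ∑ i, (μ1 i - μ2 i) * (((2 : ℝ)⁻¹ * (v1 i + v2 i))⁻¹ * (μ1 i - μ2 i)) := by
    simp [Matrix.inv_diagonal_of_ne_zero fun i => (hmid i).ne', dotProduct, Matrix.mulVec_diagonal]
  unfold hGauss bhattacharyyaCoeff1
  rw [Matrix.diagonal_add, ← Matrix.diagonal_smul]
  simp only [Pi.smul_def, smul_eq_mul]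
  rw [Matrix.det_diagonal, Matrix.det_diagonal, Matrix.det_diagonal, hquad, Finset.mul_sum,
    exp_sum, ← finsetProd_rpow _ _ (fun i _ => (h1 i).le), ← finsetProd_rpow _ _ (fun i _ => (h2 i).le),
    ← finsetProd_rpow _ _ (fun i _ => (hmid i).le), ← Finset.prod_mul_distrib,
    ← Finset.prod_div_distrib, ← Finset.prod_mul_distrib]

/-- Monotonicity of the Hellinger-type quantity `h` under appending a coordinate: if
`μ_o' = (μ_o, t_o)`, `μ_g' = (μ_g, t_g)`, `Σ_o' = diag(Σ_o, s_o²)` and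
`Σ_g' = diag(Σ_g, s_g²)` with `s_o, s_g > 0`, then
`h(μ_o', Σ_o', μ_g', Σ_g') ≥ h(μ_o, Σ_o, μ_g, Σ_g)`. -/
theorem hGauss_mono_append
    (m : ℕ) (μo μg : Fin m → ℝ) (vo vg : Fin m → ℝ)
    (hvo : ∀ i, 0 < vo i) (hvg : ∀ i, 0 < vg i)
    (tO tG sO sG : ℝ) (hsO : 0 < sO) (hsG : 0 < sG) :
    hGauss (Fin.snoc μo tO) (Matrix.diagonal (Fin.snoc vo (sO ^ 2)))
        (Fin.snoc μg tG) (Matrix.diagonal (Fin.snoc vg (sG ^ 2)))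
      ≥ hGauss μo (Matrix.diagonal vo) μg (Matrix.diagonal vg) := by
  have hsnoc {v : Fin m → ℝ} (hv : ∀ i, 0 < v i) {s : ℝ} (hs : 0 < s) :
      ∀ i, 0 < Fin.snoc (α := fun _ => ℝ) v (s ^ 2) i :=
    Fin.lastCases (by simpa using pow_pos hs 2) (by simpa using hv)
  rw [ge_iff_le, hGauss_diagonal _ _ _ _ hvo hvg,
    hGauss_diagonal _ _ _ _ (hsnoc hvo hsO) (hsnoc hvg hsG), Fin.prod_univ_castSucc]
  simp only [Fin.snoc_castSucc, Fin.snoc_last]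
  refine sqrt_le_sqrt (sub_le_sub_left (mul_le_of_le_one_right ?_ ?_) 1)
  · exact Finset.prod_nonneg fun i _ => bhattacharyyaCoeff1_nonneg (hvo i).le (hvg i).le
  · exact bhattacharyyaCoeff1_le_one (sq_nonneg sO) (sq_nonneg sG)
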